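/- arXiv:2506.12206 — 5 statements merged into one kernel-verified Lean document; each statement's English description precedes it below -/
import Mathlib

section
/- For any polynomial P of degree n with no repeated roots and no roots on the unit circle, |Δ(P)| = (∏_{|α|<1} |P'(α)|) · (∏_{|α|>1} |P'(α)/α^{n-2}|) · M(P)^{n-2}, where M(P) = |A| ∏_j max{1, |α_j|} is the Mahler measure and the products run over the roots of P. -/
/-!
Differentiating `P = A ∏ₖ (z - αₖ)` at a root gives `P'(αⱼ) = A ∏_{k ≠ j} (αⱼ - αₖ)`, so
`∏ⱼ |P'(αⱼ)| = |A|ⁿ ∏_{i<j} |αⱼ - αᵢ|²`, i.e. `|Δ(P)| = |A|^(n-2) ∏ⱼ |P'(αⱼ)|`.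
With no root on the unit circle, `M(P) = |A| ∏_{|α|>1} |α|`, and the factors `|α|^(n-2)` of the
outer roots cancel against `M(P)^(n-2) / |A|^(n-2)`.
-/

open Finset Polynomial

theorem deriv_const_mul_prod_sub_at {𝕜 ι : Type*} [NontriviallyNormedField 𝕜] [Fintype ι]
    [DecidableEq ι] (A : 𝕜) (α : ι → 𝕜) (j : ι) :
    deriv (fun z => A * ∏ k, (z - α k)) (α j) = A * ∏ k ∈ univ.erase j, (α j - α k) := by
  have hP : (fun z => A * ∏ k, (z - α k)) = fun z => (C A * Lagrange.nodal univ α).eval z := by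
    ext z
    simp [Lagrange.eval_nodal]
  rw [hP, Polynomial.deriv, derivative_C_mul, eval_mul, eval_C,
    Lagrange.eval_nodal_derivative_eval_node_eq (mem_univ j), Lagrange.eval_nodal]

theorem prod_prod_filter_lt_sq_eq_prod_prod_erase {M ι : Type*} [CommMonoid M] [Fintype ι]
    [LinearOrder ι] (f : ι → ι → M) (hf : ∀ i j, f i j = f j i) :
    ∏ i, ∏ j ∈ univ.filter (fun j => i < j), f i j ^ 2 = ∏ i, ∏ j ∈ univ.erase i, f i j := by
  have herase : ∀ i : ι,
      univ.erase i = univ.filter (fun j => i < j) ∪ univ.filter (fun j => j < i) := by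
    intro i
    ext j
    simp [ne_comm, lt_or_lt_iff_ne]
  have hflip : ∏ i : ι, ∏ j ∈ univ.filter (fun j => j < i), f i j
      = ∏ i, ∏ j ∈ univ.filter (fun j => i < j), f i j := by
    rw [prod_comm' (t' := univ) (s' := fun i => univ.filter (fun j => i < j))
      (fun i j => by simp)]
    exact prod_congr rfl fun i _ => prod_congr rfl fun j _ => hf j i
  simp_rw [herase, prod_union (disjoint_filter.2 fun j _ h => lt_asymm h), prod_mul_distrib,
    hflip, ← prod_mul_distrib, sq]

theorem prod_max_one_eq_prod_filter_one_lt {M ι : Type*} [CommMonoid M] [LinearOrder M]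
    (s : Finset ι) (f : ι → M) :
    ∏ j ∈ s, max 1 (f j) = ∏ j ∈ s.filter (fun j => 1 < f j), f j := by
  rw [prod_filter]
  refine prod_congr rfl fun j _ => ?_
  split_ifs with h
  · exact max_eq_right h.le
  · exact max_eq_left (not_lt.1 h)

theorem norm_discr_eq_zpow_mul_prod_norm_deriv {𝕜 ι : Type*} [NontriviallyNormedField 𝕜]
    [Fintype ι] [LinearOrder ι] (hι : 1 ≤ Fintype.card ι) (A : 𝕜) (hA : A ≠ 0) (α : ι → 𝕜) :
    ‖A ^ (2 * Fintype.card ι - 2) * ∏ i, ∏ j ∈ univ.filter (fun j => i < j), (α j - α i) ^ 2‖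
      = ‖A‖ ^ ((Fintype.card ι : ℤ) - 2) *
          ∏ j, ‖deriv (fun z => A * ∏ k, (z - α k)) (α j)‖ := by
  have hpow : ‖A‖ ^ (2 * Fintype.card ι - 2) =
      ‖A‖ ^ ((Fintype.card ι : ℤ) - 2) * ‖A‖ ^ Fintype.card ι := by
    rw [← zpow_natCast, ← zpow_natCast, ← zpow_add₀ (norm_ne_zero_iff.2 hA)]
    congr 1
    omega
  simp_rw [deriv_const_mul_prod_sub_at, norm_mul, norm_pow, norm_prod, norm_pow,
    prod_mul_distrib, prod_const, card_univ]
  rw [prod_prod_filter_lt_sq_eq_prod_prod_erase (fun i j => ‖α j - α i‖)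
    (fun i j => norm_sub_rev _ _), hpow, mul_assoc]
  exact congrArg (_ * ·) <| congrArg (_ * ·) <|
    prod_congr rfl fun i _ => prod_congr rfl fun j _ => norm_sub_rev _ _

theorem abs_discriminant_eq_inside_outside_mahler_general (n : ℕ) (hn : 1 ≤ n) (A : ℂ) (hA : A ≠ 0)
    (α : Fin n → ℂ)
    (hcirc : ∀ j, ‖α j‖ ≠ 1)
    (P : ℂ → ℂ) (hP : ∀ z, P z = A * ∏ j, (z - α j)) :
    ‖A ^ (2 * n - 2) *
        ∏ i, ∏ j ∈ univ.filter (fun j => i < j), (α j - α i) ^ 2‖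
      = (∏ j ∈ univ.filter (fun j => ‖α j‖ < 1), ‖deriv P (α j)‖)
        * (∏ j ∈ univ.filter (fun j => 1 < ‖α j‖),
            ‖deriv P (α j) / (α j) ^ ((n : ℤ) - 2)‖)
        * (‖A‖ * ∏ j, max 1 (‖α j‖)) ^ ((n : ℤ) - 2) := by
  obtain rfl : P = fun z => A * ∏ j, (z - α j) := funext hP
  have hdiscr := norm_discr_eq_zpow_mul_prod_norm_deriv (by simpa using hn) A hA α
  rw [Fintype.card_fin] at hdiscr
  have hout : univ.filter (fun j => ¬ ‖α j‖ < 1) = univ.filter (fun j => 1 < ‖α j‖) :=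
    filter_congr fun j _ => by simp [lt_iff_le_and_ne, hcirc j, ne_comm]
  have hout_ne_zero : ∏ j ∈ univ.filter (fun j => 1 < ‖α j‖), ‖α j‖ ≠ 0 :=
    prod_ne_zero_iff.2 fun j hj => by have := (mem_filter.1 hj).2; positivity
  rw [hdiscr, ← prod_filter_mul_prod_filter_not univ (fun j => ‖α j‖ < 1), hout,
    prod_max_one_eq_prod_filter_one_lt, mul_zpow]
  simp_rw [norm_div, norm_zpow, prod_div_distrib, prod_zpow]
  field_simp

/-- `|Δ(P)| = (∏_{|α|<1} |P'(α)|) · (∏_{|α|>1} |P'(α)/α^(n-2)|) · M(P)^(n-2)` for a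
polynomial with distinct roots, none on the unit circle. -/
theorem abs_discriminant_eq_inside_outside_mahler (n : ℕ) (hn : 1 ≤ n) (A : ℂ) (hA : A ≠ 0)
    (α : Fin n → ℂ) (hα : Function.Injective α)
    (hcirc : ∀ j, ‖α j‖ ≠ 1)
    (P : ℂ → ℂ) (hP : ∀ z, P z = A * ∏ j, (z - α j)) :
    ‖A ^ (2 * n - 2) *
        ∏ i, ∏ j ∈ univ.filter (fun j => i < j), (α j - α i) ^ 2‖
      = (∏ j ∈ univ.filter (fun j => ‖α j‖ < 1), ‖deriv P (α j)‖)
        * (∏ j ∈ univ.filter (fun j => 1 < ‖α j‖),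
            ‖deriv P (α j) / (α j) ^ ((n : ℤ) - 2)‖)
        * (‖A‖ * ∏ j, max 1 (‖α j‖)) ^ ((n : ℤ) - 2) :=
  abs_discriminant_eq_inside_outside_mahler_general n hn A hA α hcirc P hP
end

section
/- Let f be analytic on the closed unit disk with f(0) ≠ 0, and let M_f = max_{|z|=1} |f(z)|. Then for every r ∈ (0,1), the number of zeros of f in the closed disk {|z| ≤ r} (counted with multiplicity) is at most (1/(1-r)) · log(M_f / |f(0)|). -/
/-!
By the maximum modulus principle `0 < ‖f 0‖ ≤ M_f`. Jensen's inequality then bounds the number of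
zeros in the disk of radius `r` by `log (M_f / ‖f 0‖) / log (1 / r)`, and `log (1 / r) ≥ 1 - r`.
-/

open Metric MeromorphicOn

section Divisor

variable {𝕜 E : Type*} [NontriviallyNormedField 𝕜] [NormedAddCommGroup E] [NormedSpace 𝕜 E]

lemma analyticOrderAt_const_smul {f : 𝕜 → E} {z : 𝕜} (hf : AnalyticAt 𝕜 f z) {c : 𝕜}
    (hc : c ≠ 0) : analyticOrderAt (c • f) z = analyticOrderAt f z := by
  have h := analyticOrderAt_smul (analyticAt_const (v := c)) hf
  rwa [(analyticOrderAt_eq_zero (f := fun _ => c)).mpr (Or.inr hc), zero_add] at h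

lemma AnalyticOnNhd.divisor_const_smul {U : Set 𝕜} {f : 𝕜 → E} (hf : AnalyticOnNhd 𝕜 f U)
    {c : 𝕜} (hc : c ≠ 0) : divisor (c • f) U = divisor f U := by
  ext z
  by_cases hz : z ∈ U
  · rw [(hf.const_smul (c := c)).divisor_apply hz, hf.divisor_apply hz,
      analyticOrderAt_const_smul (hf z hz) hc]
  · simp [hz]

lemma AnalyticOnNhd.finsum_divisor_eq_sum {U : Set 𝕜} {f : 𝕜 → E} (hf : AnalyticOnNhd 𝕜 f U)
    {Z : Finset 𝕜} (hZ : ∀ z, z ∈ Z ↔ z ∈ U ∧ f z = 0) {m : 𝕜 → ℕ}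
    (hm : ∀ z ∈ U, analyticOrderAt f z = m z) :
    ∑ᶠ u, divisor f U u = ∑ z ∈ Z, (m z : ℤ) := by
  have hdiv : ∀ z ∈ U, divisor f U z = m z := fun z hz => by
    rw [hf.divisor_apply hz, hm z hz]
    rfl
  refine (finsum_eq_sum_of_support_subset _ fun z hz => ?_).trans
    (Finset.sum_congr rfl fun z hz => hdiv z ((hZ z).1 hz).1)
  have hzU : z ∈ U := (divisor f U).supportWithinDomain hz
  refine (hZ z).2 ⟨hzU, ?_⟩
  by_contra hfz
  have hmz : m z = 0 := by
    exact_mod_cast (hm z hzU).symm.trans (analyticOrderAt_eq_zero.2 (Or.inr hfz))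
  simp [hdiv z hzU, hmz] at hz

end Divisor

lemma AnalyticOnNhd.norm_le_of_forall_mem_sphere_norm_le {E : Type*} [NormedAddCommGroup E]
    [NormedSpace ℂ E] {f : ℂ → E} {c : ℂ} {R M : ℝ} (hR : 0 < R)
    (hf : AnalyticOnNhd ℂ f (closedBall c R)) (hM : ∀ z ∈ sphere c R, ‖f z‖ ≤ M) :
    ‖f c‖ ≤ M := by
  refine Complex.norm_le_of_forall_mem_frontier_norm_le isBounded_ball
    (hf.differentiableOn.diffContOnCl_ball subset_rfl) (by rwa [frontier_ball c hR.ne']) ?_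
  rw [closure_ball c hR.ne']
  exact mem_closedBall_self hR.le

/-- Mathlib's `AnalyticOnNhd.sum_divisor_le` assumes `1 ≤ M`; dividing `f` by `M` removes this. -/
theorem AnalyticOnNhd.sum_divisor_le_of_pos {c : ℂ} {r R M : ℝ} {f : ℂ → ℂ} (hr : 0 < r)
    (hrR : r < R) (hM : 0 < M) (hf : AnalyticOnNhd ℂ f (closedBall c R)) (hfc : f c ≠ 0)
    (hfM : ∀ z ∈ sphere c R, ‖f z‖ ≤ M) :
    ∑ᶠ u, divisor f (closedBall c r) u ≤ Real.log (M / ‖f c‖) / Real.log (R / r) := by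
  have hR : 0 < R := hr.trans hrR
  have hM' : (M : ℂ)⁻¹ ≠ 0 := by exact_mod_cast (inv_pos.2 hM).ne'
  have hnorm : ∀ z, ‖((M : ℂ)⁻¹ • f) z‖ = M⁻¹ * ‖f z‖ := fun z => by
    rw [Pi.smul_apply, norm_smul, norm_inv, Complex.norm_real, Real.norm_of_nonneg hM.le]
  have h := AnalyticOnNhd.sum_divisor_le (c := c) (r := r) (R := R) (f := (M : ℂ)⁻¹ • f)
    (by rwa [abs_of_pos hr]) (by rwa [abs_of_pos hr, abs_of_pos hR]) le_rfl
    (by rw [abs_of_pos hR]; exact hf.const_smul) (smul_ne_zero hM' hfc)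
    (fun z hz => by
      rw [abs_of_pos hR] at hz
      exact (hnorm z).trans_le (inv_mul_le_one_of_le₀ (hfM z hz) hM.le))
  rwa [abs_of_pos hr, (hf.mono (closedBall_subset_closedBall hrR.le)).divisor_const_smul hM',
    hnorm, inv_mul_eq_div, one_div_div] at h

/-- Jensen-type bound: if `f` is analytic on (a neighborhood of) the closed unit disk with
`f 0 ≠ 0`, then for `r ∈ (0,1)` the number of zeros of `f` in `{|z| ≤ r}` counted with
multiplicity is at most `(1/(1-r)) log (M_f / |f 0|)`. -/
theorem zero_count_le_jensen (f : ℂ → ℂ)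
    (hf : AnalyticOnNhd ℂ f (Metric.closedBall (0:ℂ) 1)) (h0 : f 0 ≠ 0)
    (Mf : ℝ) (hMf : IsGreatest ((fun z => ‖f z‖) '' Metric.sphere (0:ℂ) 1) Mf)
    (r : ℝ) (hr : r ∈ Set.Ioo (0:ℝ) 1)
    (Z : Finset ℂ) (hZ : ∀ z, z ∈ Z ↔ z ∈ Metric.closedBall (0:ℂ) r ∧ f z = 0)
    (m : ℂ → ℕ)
    (hm : ∀ z (hz : z ∈ Metric.closedBall (0:ℂ) 1), analyticOrderAt f z = (m z : ℕ∞)) :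
    (∑ z ∈ Z, m z : ℝ) ≤ (1 / (1 - r)) * Real.log (Mf / ‖f 0‖) := by
  obtain ⟨hr0, hr1⟩ := hr
  have hsub : closedBall (0:ℂ) r ⊆ closedBall 0 1 := closedBall_subset_closedBall hr1.le
  have hbound : ∀ z ∈ sphere (0:ℂ) 1, ‖f z‖ ≤ Mf := fun z hz => hMf.2 ⟨z, hz, rfl⟩
  have hmax : ‖f 0‖ ≤ Mf := hf.norm_le_of_forall_mem_sphere_norm_le one_pos hbound
  have hf0 : 0 < ‖f 0‖ := norm_pos_iff.2 h0
  have hcount : (∑ z ∈ Z, m z : ℝ) = ((∑ᶠ u, divisor f (closedBall 0 r) u : ℤ) : ℝ) := by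
    rw [(hf.mono hsub).finsum_divisor_eq_sum hZ fun z hz => hm z (hsub hz)]
    push_cast
    rfl
  have hlog : 1 - r ≤ Real.log (1 / r) := by
    simpa using Real.one_sub_inv_le_log_of_pos (one_div_pos.2 hr0)
  calc (∑ z ∈ Z, m z : ℝ)
      ≤ Real.log (Mf / ‖f 0‖) / Real.log (1 / r) :=
        hcount ▸ hf.sum_divisor_le_of_pos hr0 hr1 (hf0.trans_le hmax) h0 hbound
    _ ≤ Real.log (Mf / ‖f 0‖) / (1 - r) :=
        div_le_div_of_nonneg_left (Real.log_nonneg ((one_le_div hf0).2 hmax)) (sub_pos.2 hr1) hlog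
    _ = (1 / (1 - r)) * Real.log (Mf / ‖f 0‖) := by ring
end

section
/- For any analytic function f on the closed unit disk with f(0) ≠ 0, Jensen's formula combined with the bound log(1/r) ≥ 1 - r for r ∈ (0,1) yields: the zero-counting bound #{|α| ≤ r : f(α) = 0} ≤ (1/log(1/r)) · log(M_f/|f(0)|), where M_f is the maximum of |f| on the unit circle. -/
open Finset

/-!
By Jensen's formula the circle average of `log ‖f‖` is `log ‖f 0‖` plus a term
`log (1 / ‖α‖) ≥ 0` for each zero `α` in the unit disk, and that term is at least `log (1 / r)`
when `‖α‖ ≤ r`; bounding the average by `log M` gives the claim. Mathlib's form of this inequality asks for `1 ≤ M`, because `log ‖f z‖ = log 0 = 0` at a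
zero on the circle; dividing `f` by `M`, which is positive by the maximum modulus principle, removes
that restriction without moving the zeros.
-/

open Metric

namespace MeromorphicOn

theorem divisor_const_smul {𝕜 E : Type*} [NontriviallyNormedField 𝕜]
    [NormedAddCommGroup E] [NormedSpace 𝕜 E] {U : Set 𝕜} {f : 𝕜 → E} {a : 𝕜} (ha : a ≠ 0)
    (hf : MeromorphicOn f U) :
    divisor (a • f) U = divisor f U := by
  classical
  ext z
  by_cases hz : z ∈ U
  · rw [divisor_apply (hf.const_smul a) hz, divisor_apply hf hz,
      show a • f = (fun _ ↦ a : 𝕜 → 𝕜) • f from rfl,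
      meromorphicOrderAt_smul (.const a z) (hf z hz)]
    simp [meromorphicOrderAt_const, ha]
  · simp [hz]

end MeromorphicOn

open MeromorphicOn

namespace AnalyticOnNhd

theorem finsum_divisor_eq_sum_s5 {𝕜 E : Type*} [NontriviallyNormedField 𝕜]
    [NormedAddCommGroup E] [NormedSpace 𝕜 E] {U : Set 𝕜} {f : 𝕜 → E}
    (hf : AnalyticOnNhd 𝕜 f U) {Z : Finset 𝕜} (hZ : ∀ z, z ∈ Z ↔ z ∈ U ∧ f z = 0) {m : 𝕜 → ℕ}
    (hm : ∀ z ∈ Z, analyticOrderAt f z = m z) :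
    ∑ᶠ u, divisor f U u = ∑ z ∈ Z, (m z : ℤ) := by
  rw [finsum_eq_sum_of_support_subset _ fun u hu ↦ ?_]
  · refine sum_congr rfl fun z hz ↦ ?_
    rw [hf.divisor_apply ((hZ z).mp hz).1, hm z hz]
    rfl
  · by_contra huZ
    by_cases hU : u ∈ U
    · have hfu : f u ≠ 0 := fun h ↦ huZ ((hZ u).mpr ⟨hU, h⟩)
      simp [hf.divisor_apply hU, (hf u hU).analyticOrderAt_eq_zero.mpr hfu] at hu
    · exact hu (Function.locallyFinsuppWithin.apply_eq_zero_of_notMem _ hU)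

theorem sum_divisor_le_of_norm_le {c : ℂ} {r R M : ℝ} {f : ℂ → ℂ} (r_pos : 0 < |r|)
    (r_lt_R : |r| < |R|) (h₁f : AnalyticOnNhd ℂ f (closedBall c |R|)) (h₂f : f c ≠ 0)
    (f_bound : ∀ z ∈ sphere c |R|, ‖f z‖ ≤ M) :
    ∑ᶠ u, divisor f (closedBall c |r|) u ≤ Real.log (M / ‖f c‖) / Real.log (R / r) := by
  have hR : 0 < |R| := r_pos.trans r_lt_R
  have hM : 0 < M := by
    have hd : DiffContOnCl ℂ f (ball c |R|) := by
      refine DifferentiableOn.diffContOnCl ?_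
      rw [closure_ball c hR.ne']
      exact h₁f.differentiableOn
    have hfc : ‖f c‖ ≤ M := by
      simpa using Complex.norm_iteratedDeriv_le_of_forall_mem_sphere_norm_le 0 hR hd f_bound
    exact (norm_pos_iff.mpr h₂f).trans_le hfc
  have hM' : (M⁻¹ : ℂ) ≠ 0 := by simp [hM.ne']
  have hnorm (z : ℂ) : ‖((M⁻¹ : ℂ) • f) z‖ = M⁻¹ * ‖f z‖ := by
    rw [Pi.smul_apply, norm_smul, norm_inv, Complex.norm_real, Real.norm_of_nonneg hM.le]
  have jensen := (h₁f.const_smul (c := (M⁻¹ : ℂ))).sum_divisor_le r_pos r_lt_R le_rfl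
    (by simp [hM.ne', h₂f]) fun z hz ↦ by rw [hnorm, inv_mul_le_one₀ hM]; exact f_bound z hz
  rwa [(h₁f.mono (closedBall_subset_closedBall r_lt_R.le)).meromorphicOn.divisor_const_smul hM',
    hnorm, show 1 / (M⁻¹ * ‖f c‖) = M / ‖f c‖ by field_simp] at jensen

end AnalyticOnNhd

/-- Jensen-type bound: if `f` is analytic on (a neighborhood of) the closed unit disk with
`f 0 ≠ 0`, then for `r ∈ (0,1)` the number of zeros of `f` in `{|z| ≤ r}` counted with
multiplicity is at most `(1/log(1/r)) log (M_f / |f 0|)`. -/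
theorem zero_count_le_jensen_log (f : ℂ → ℂ)
    (hf : AnalyticOnNhd ℂ f (Metric.closedBall (0:ℂ) 1)) (h0 : f 0 ≠ 0)
    (Mf : ℝ) (hMf : IsGreatest ((fun z => ‖f z‖) '' Metric.sphere (0:ℂ) 1) Mf)
    (r : ℝ) (hr : r ∈ Set.Ioo (0:ℝ) 1)
    (Z : Finset ℂ) (hZ : ∀ z, z ∈ Z ↔ z ∈ Metric.closedBall (0:ℂ) r ∧ f z = 0)
    (m : ℂ → ℕ)
    (hm : ∀ z (hz : z ∈ Metric.closedBall (0:ℂ) 1), analyticOrderAt f z = (m z : ℕ∞)) :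
    (∑ z ∈ Z, m z : ℝ) ≤ (1 / Real.log (1 / r)) * Real.log (Mf / ‖f 0‖) := by
  obtain ⟨hr0, hr1⟩ := hr
  have hf1 : AnalyticOnNhd ℂ f (closedBall 0 |1|) := by rwa [abs_one]
  have hfr : AnalyticOnNhd ℂ f (closedBall 0 |r|) :=
    hf.mono (closedBall_subset_closedBall (by rw [abs_of_pos hr0]; exact hr1.le))
  have hcount : ∑ᶠ u, divisor f (closedBall 0 |r|) u = ∑ z ∈ Z, (m z : ℤ) :=
    hfr.finsum_divisor_eq_sum_s5 (by simpa [abs_of_pos hr0] using hZ) fun z hz ↦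
      hm z (closedBall_subset_closedBall hr1.le ((hZ z).mp hz).1)
  have jensen := hf1.sum_divisor_le_of_norm_le (abs_pos.mpr hr0.ne')
    (by simpa [abs_of_pos hr0] using hr1) h0 fun z hz ↦ hMf.2 ⟨z, by simpa using hz, rfl⟩
  rw [hcount] at jensen
  rw [one_div_mul_eq_div]
  exact_mod_cast jensen
end

section
/- The function Φ(t) = (1/t² - 1/sinh²(t)) · log( (1 + 2t² - cosh(2t))(1 - coth(t)) / (2t³) ) satisfies lim_{t→∞} (t²/log t) · Φ(t) = -3. In particular Φ is integrable on (0,∞). -/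
/-!
For `t > 0` put `q t = t² / sinh² t`. Since `cosh 2t = 1 + 2 sinh² t` and `cosh t - sinh t = e^{-t}`,
`Φ t = (1 - q t) / t² * log (Y t / t³)` with `Y t = e^{-t} sinh t (1 - q t)`.
As `t → ∞`, `q t → 0` and `Y t → 1/2`, so `(t² / log t) Φ t = (1 - q t) (log (Y t) / log t - 3) → -3`;
in particular `Φ t = O(t^{-3/2})`. Near `0`, `t + t³/6 ≤ sinh t ≤ t cosh t` gives
`t²/12 ≤ 1 - q t ≤ t²`, which keeps both factors of `Φ` bounded on `(0, 1]`.
-/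

open Real Filter Set MeasureTheory Asymptotics Topology

namespace Real

theorem add_pow_three_div_six_le_sinh {t : ℝ} (ht : 0 ≤ t) : t + t ^ 3 / 6 ≤ sinh t := by
  have h := sum_le_hasSum (Finset.range 2) (fun n _ => by positivity) (hasSum_sinh t)
  norm_num [Finset.sum_range_succ, Nat.factorial] at h
  linarith

theorem sinh_le_mul_cosh {t : ℝ} (ht : 0 ≤ t) : sinh t ≤ t * cosh t := by
  refine hasSum_le (fun n => ?_) (hasSum_sinh t) ((hasSum_cosh t).mul_left t)
  rw [pow_succ', mul_div_assoc]
  gcongr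
  omega

theorem sinh_le_two_mul {t : ℝ} (h0 : 0 ≤ t) (h1 : t ≤ 1) : sinh t ≤ 2 * t := by
  have hcosh : cosh t < 2 := by
    calc cosh t ≤ cosh 1 := cosh_le_cosh.2 (by rw [abs_of_nonneg h0, abs_one]; exact h1)
      _ = (exp 1 + exp (-1)) / 2 := cosh_eq 1
      _ < 2 := by linarith [exp_one_lt_three, exp_neg_one_lt_half]
  nlinarith [sinh_le_mul_cosh h0]

theorem sq_div_sinh_sq_lt_one {t : ℝ} (ht : 0 < t) : t ^ 2 / sinh t ^ 2 < 1 := by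
  have := self_lt_sinh_iff.2 ht
  rw [div_lt_one (by positivity)]
  gcongr

theorem one_sub_sq_div_sinh_sq_le_sq {t : ℝ} (ht : 0 < t) : 1 - t ^ 2 / sinh t ^ 2 ≤ t ^ 2 := by
  have hs : 0 < sinh t := sinh_pos_iff.2 ht
  have hsq : sinh t ^ 2 ≤ t ^ 2 * cosh t ^ 2 := by
    rw [← mul_pow]
    gcongr
    exact sinh_le_mul_cosh ht.le
  rw [one_sub_div (by positivity), div_le_iff₀ (by positivity)]
  nlinarith [cosh_sq t]

theorem sq_div_twelve_le_one_sub_sq_div_sinh_sq {t : ℝ} (h0 : 0 < t) (h1 : t ≤ 1) :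
    t ^ 2 / 12 ≤ 1 - t ^ 2 / sinh t ^ 2 := by
  have hs : 0 < sinh t := sinh_pos_iff.2 h0
  have hlo := add_pow_three_div_six_le_sinh h0.le
  have hhi := sinh_le_two_mul h0.le h1
  rw [one_sub_div (by positivity), div_le_div_iff₀ (by norm_num) (by positivity)]
  have hdiff : t ^ 3 / 6 * (2 * t) ≤ (sinh t - t) * (sinh t + t) :=
    mul_le_mul (by linarith) (by linarith [self_le_sinh_iff.2 h0.le]) (by positivity)
      (by linarith [self_le_sinh_iff.2 h0.le])
  have hsq : t ^ 2 * sinh t ^ 2 ≤ t ^ 2 * (2 * t) ^ 2 := by gcongr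
  nlinarith

theorem tendsto_sq_div_sinh_sq_atTop : Tendsto (fun t => t ^ 2 / sinh t ^ 2) atTop (𝓝 0) := by
  refine squeeze_zero' ?_ ?_ ((tendsto_pow_atTop (n := 4) (by norm_num)).const_div_atTop 36)
  · filter_upwards with t
    positivity
  · filter_upwards [eventually_gt_atTop 0] with t ht
    have hlo : t ^ 3 / 6 ≤ sinh t := by linarith [add_pow_three_div_six_le_sinh ht.le]
    have : (t ^ 3 / 6) ^ 2 ≤ sinh t ^ 2 := by gcongr
    rw [div_le_div_iff₀ (by positivity) (by positivity)]
    nlinarith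

theorem tendsto_exp_neg_mul_sinh_atTop : Tendsto (fun t => exp (-t) * sinh t) atTop (𝓝 (1 / 2)) := by
  have h : ∀ t, exp (-t) * sinh t = (1 - exp (-t) ^ 2) / 2 := fun t => by
    rw [sinh_eq, exp_neg]; field_simp
  simp_rw [h]
  simpa using ((tendsto_exp_neg_atTop_nhds_zero.pow 2).const_sub 1).div_const 2

theorem abs_log_le_log_of_mem_Icc {c x : ℝ} (hc : 0 < c) (hx : x ∈ Icc c⁻¹ c) :
    |log x| ≤ log c := by
  have hx0 : 0 < x := (inv_pos.2 hc).trans_le hx.1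
  rw [abs_le, ← log_inv]
  exact ⟨log_le_log (inv_pos.2 hc) hx.1, log_le_log hx0 hx.2⟩

end Real

noncomputable def Phi (t : ℝ) : ℝ :=
  (1 / t ^ 2 - 1 / sinh t ^ 2) *
    log ((1 + 2 * t ^ 2 - cosh (2 * t)) * (1 - cosh t / sinh t) / (2 * t ^ 3))

theorem Phi_eq_of_pos {t : ℝ} (ht : 0 < t) :
    Phi t = (1 - t ^ 2 / sinh t ^ 2) / t ^ 2 *
      log (exp (-t) * sinh t * (1 - t ^ 2 / sinh t ^ 2) / t ^ 3) := by
  have hs : sinh t ≠ 0 := (sinh_pos_iff.2 ht).ne'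
  have hcosh : cosh t = sinh t + exp (-t) := by linarith [cosh_sub_sinh t]
  unfold Phi
  congr 2
  · field_simp
  · rw [cosh_two_mul, cosh_sq, hcosh]
    field_simp
    ring

theorem abs_Phi_le {t : ℝ} (h0 : 0 < t) (h1 : t ≤ 1) : |Phi t| ≤ log 36 := by
  set a := 1 - t ^ 2 / sinh t ^ 2
  have hs : 0 < sinh t := sinh_pos_iff.2 h0
  have hA : a / t ^ 2 ∈ Icc (1 / 12) 1 := by
    constructor
    · rw [le_div_iff₀ (by positivity)]
      linarith [sq_div_twelve_le_one_sub_sq_div_sinh_sq h0 h1]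
    · rw [div_le_one (by positivity)]
      exact one_sub_sq_div_sinh_sq_le_sq h0
  have hS : sinh t / t ∈ Icc 1 2 := by
    constructor
    · rw [le_div_iff₀ h0]; linarith [self_le_sinh_iff.2 h0.le]
    · rw [div_le_iff₀ h0]; linarith [sinh_le_two_mul h0.le h1]
  have hE : exp (-t) ∈ Icc (1 / 3) 1 := by
    constructor
    · calc (1 : ℝ) / 3 ≤ exp (-1) := by linarith [exp_neg_one_gt_d9]
        _ ≤ exp (-t) := exp_le_exp.2 (by linarith)
    · exact exp_le_one_iff.2 (by linarith)
  have hX : exp (-t) * (sinh t / t) * (a / t ^ 2) ∈ Icc 36⁻¹ 36 := by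
    constructor
    · calc (36 : ℝ)⁻¹ = 1 / 3 * 1 * (1 / 12) := by norm_num
        _ ≤ _ := by gcongr ?_ * ?_ * ?_; exacts [hE.1, hS.1, hA.1]
    · calc _ ≤ (1 : ℝ) * 2 * 1 := by
            gcongr ?_ * ?_ * ?_; exacts [by linarith [hA.1], hE.2, hS.2, hA.2]
        _ ≤ 36 := by norm_num
  have hPhi : Phi t = a / t ^ 2 * log (exp (-t) * (sinh t / t) * (a / t ^ 2)) := by
    rw [Phi_eq_of_pos h0]
    congr 2
    simp only [a]
    field_simp
  rw [hPhi, abs_mul, abs_of_nonneg (by linarith [hA.1])]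
  calc _ ≤ 1 * log 36 := by gcongr; exacts [hA.2, abs_log_le_log_of_mem_Icc (by norm_num) hX]
    _ = log 36 := one_mul _

theorem continuousOn_Phi : ContinuousOn Phi (Ioi 0) := by
  refine ContinuousOn.congr (fun t (ht : 0 < t) => ?_) fun t ht => Phi_eq_of_pos ht
  have hs : sinh t ≠ 0 := (sinh_pos_iff.2 ht).ne'
  have hq : 1 - t ^ 2 / sinh t ^ 2 ≠ 0 := (sub_pos.2 (sq_div_sinh_sq_lt_one ht)).ne'
  exact ContinuousAt.continuousWithinAt (by fun_prop (disch := simp [ht.ne', hs, hq]))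

theorem tendsto_sq_div_log_mul_Phi_atTop :
    Tendsto (fun t => t ^ 2 / log t * Phi t) atTop (𝓝 (-3)) := by
  have hq := tendsto_sq_div_sinh_sq_atTop
  have hY : Tendsto (fun t => exp (-t) * sinh t * (1 - t ^ 2 / sinh t ^ 2)) atTop (𝓝 (1 / 2)) := by
    simpa using tendsto_exp_neg_mul_sinh_atTop.mul (hq.const_sub 1)
  have hlogY := (hY.log (by norm_num)).div_atTop tendsto_log_atTop
  have hlim := (hq.const_sub 1).mul (hlogY.sub_const 3)
  rw [sub_zero, zero_sub, one_mul] at hlim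
  refine hlim.congr' ?_
  filter_upwards [eventually_gt_atTop 1] with t ht
  have ht0 : 0 < t := by linarith
  have hs : sinh t ≠ 0 := (sinh_pos_iff.2 ht0).ne'
  have hq : 1 - t ^ 2 / sinh t ^ 2 ≠ 0 := (sub_pos.2 (sq_div_sinh_sq_lt_one ht0)).ne'
  have hlog : log t ≠ 0 := (log_pos ht).ne'
  rw [Phi_eq_of_pos ht0, log_div (by simp [hs, hq]) (by positivity), log_pow]
  field_simp
  ring

theorem isBigO_Phi_rpow_atTop : Phi =O[atTop] fun t => t ^ (-3 / 2 : ℝ) := by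
  have hlog : (fun t => log t / t ^ 2) =O[atTop] fun t => t ^ (-3 / 2 : ℝ) := by
    refine (IsBigO.mul_atTop_rpow_of_isBigO_rpow (1 / 2) (-2) _
      (isLittleO_log_rpow_atTop (by norm_num)).isBigO (isBigO_refl _ atTop) (by norm_num)).congr_left
      fun t => by simp [div_eq_mul_inv]
  refine ((tendsto_sq_div_log_mul_Phi_atTop.isBigO_one ℝ).mul hlog).congr' ?_ (by simp)
  filter_upwards [eventually_gt_atTop 1] with t ht
  have : log t ≠ 0 := (log_pos ht).ne'
  field_simp

theorem integrableOn_Phi_Ioc : IntegrableOn Phi (Ioc 0 1) :=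
  IntegrableOn.of_bound measure_Ioc_lt_top
    (continuousOn_Phi.mono Ioc_subset_Ioi_self |>.aestronglyMeasurable measurableSet_Ioc) (log 36)
    ((ae_restrict_iff' measurableSet_Ioc).2 (ae_of_all _ fun _ ht => abs_Phi_le ht.1 ht.2))

theorem integrableOn_Phi_Ici : IntegrableOn Phi (Ici 1) :=
  ((continuousOn_Phi.mono (Ici_subset_Ioi.2 zero_lt_one)).locallyIntegrableOn
    measurableSet_Ici).integrableOn_of_isBigO_atTop isBigO_Phi_rpow_atTop
    (integrableAtFilter_rpow_atTop_iff.2 (by norm_num))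

/-- The function `Φ(t) = (1/t² - 1/sinh²t) log((1 + 2t² - cosh 2t)(1 - coth t)/(2t³))`
satisfies `(t²/log t) Φ(t) → -3` as `t → ∞`; in particular `Φ` is integrable on `(0,∞)`. -/
theorem Phi_tendsto_at_top_and_integrable :
    Filter.Tendsto
      (fun t : ℝ => t ^ 2 / Real.log t *
        ((1 / t ^ 2 - 1 / Real.sinh t ^ 2) *
          Real.log ((1 + 2 * t ^ 2 - Real.cosh (2 * t)) *
            (1 - Real.cosh t / Real.sinh t) / (2 * t ^ 3))))
      Filter.atTop (nhds (-3)) ∧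
    MeasureTheory.IntegrableOn
      (fun t : ℝ => (1 / t ^ 2 - 1 / Real.sinh t ^ 2) *
        Real.log ((1 + 2 * t ^ 2 - Real.cosh (2 * t)) *
          (1 - Real.cosh t / Real.sinh t) / (2 * t ^ 3)))
      (Set.Ioi 0) := by
  refine ⟨tendsto_sq_div_log_mul_Phi_atTop, ?_⟩
  rw [← Ioc_union_Ioi_eq_Ioi zero_le_one]
  exact integrableOn_Phi_Ioc.union (integrableOn_Phi_Ici.mono_set Ioi_subset_Ici_self)
end

section
/- For r ∈ [0,1], θ with n^{-1/2} ≤ |θ| ≤ π - n^{-1/2}, and ℓ ∈ {0,1,2}, the trigonometric sums satisfy |∑_{k=0}^n r^k k^ℓ cos(kθ)| ≤ 8 n^{1/2+ℓ} and |∑_{k=0}^n r^k k^ℓ sin(kθ)| ≤ 8 n^{1/2+ℓ}. -/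
/-!
Write `z = r e^{iθ}`; the two sums are the real and imaginary parts of `∑ k^ℓ z^k`. Since
`‖z‖ ≤ 1`, every partial geometric sum of `z` has norm at most `2 / ‖1 - z‖`, so Abel summation
against the increasing weights `k^ℓ` bounds `‖∑ k^ℓ z^k‖` by `4 n^ℓ / ‖1 - z‖`. Finally
`‖1 - z‖ ≥ |sin θ| ≥ n^{-1/2} / 2`, by Jordan's inequality `sin y ≥ 2y/π` on `[0, π/2]`.
-/

open Finset Real

theorem Monotone.norm_sum_range_succ_smul_le {E : Type*} [SeminormedAddCommGroup E]
    [NormedSpace ℝ E] {f : ℕ → ℝ} {g : ℕ → E} {b : ℝ} (hf : Monotone f) (hf0 : 0 ≤ f 0)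
    (hg : ∀ m, ‖∑ i ∈ range m, g i‖ ≤ b) (n : ℕ) :
    ‖∑ i ∈ range (n + 1), f i • g i‖ ≤ 2 * f n * b := by
  have hb : 0 ≤ b := by simpa using hg 0
  have hincr : ∀ i, 0 ≤ f (i + 1) - f i := fun i ↦ sub_nonneg.2 (hf i.le_succ)
  rw [sum_range_by_parts, add_tsub_cancel_right]
  calc ‖f n • ∑ i ∈ range (n + 1), g i
          - ∑ i ∈ range n, (f (i + 1) - f i) • ∑ j ∈ range (i + 1), g j‖
      ≤ f n * b + ∑ i ∈ range n, (f (i + 1) - f i) * b := by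
        refine (norm_sub_le _ _).trans (add_le_add ?_ ((norm_sum_le _ _).trans ?_))
        · rw [norm_smul, Real.norm_of_nonneg (hf0.trans (hf n.zero_le))]
          exact mul_le_mul_of_nonneg_left (hg _) (hf0.trans (hf n.zero_le))
        · refine sum_le_sum fun i _ ↦ ?_
          rw [norm_smul, Real.norm_of_nonneg (hincr i)]
          exact mul_le_mul_of_nonneg_left (hg _) (hincr i)
    _ = (2 * f n - f 0) * b := by rw [← sum_mul, sum_range_sub]; ring
    _ ≤ 2 * f n * b := by nlinarith

theorem norm_geom_sum_le_of_norm_le_one {K : Type*} [NormedDivisionRing K] {z : K}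
    (hz : ‖z‖ ≤ 1) (hz1 : z ≠ 1) (m : ℕ) :
    ‖∑ i ∈ range m, z ^ i‖ ≤ 2 / ‖1 - z‖ := by
  rw [geom_sum_eq hz1, norm_div, norm_sub_rev z]
  gcongr
  calc ‖z ^ m - 1‖ ≤ ‖z ^ m‖ + ‖(1 : K)‖ := norm_sub_le _ _
    _ ≤ 1 + 1 := by
        rw [norm_pow, norm_one]
        gcongr
        exact pow_le_one₀ (norm_nonneg z) hz
    _ = 2 := by norm_num

theorem norm_sum_smul_pow_le_of_monotone {K : Type*} [NormedDivisionRing K] [NormedAlgebra ℝ K]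
    {z : K} (hz : ‖z‖ ≤ 1) (hz1 : z ≠ 1) {f : ℕ → ℝ} (hf : Monotone f) (hf0 : 0 ≤ f 0)
    (n : ℕ) : ‖∑ k ∈ range (n + 1), f k • z ^ k‖ ≤ 4 * f n / ‖1 - z‖ := by
  calc _ ≤ 2 * f n * (2 / ‖1 - z‖) :=
        hf.norm_sum_range_succ_smul_le hf0 (norm_geom_sum_le_of_norm_le_one hz hz1) n
    _ = 4 * f n / ‖1 - z‖ := by ring

theorem abs_sin_le_norm_one_sub_ofReal_mul_exp (r θ : ℝ) :
    |sin θ| ≤ ‖1 - (r : ℂ) * Complex.exp (θ * Complex.I)‖ := by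
  have hsq : ‖1 - (r : ℂ) * Complex.exp (θ * Complex.I)‖ ^ 2
      = (1 - r * cos θ) ^ 2 + (r * sin θ) ^ 2 := by
    rw [Complex.sq_norm, Complex.normSq_apply]
    simp only [Complex.sub_re, Complex.sub_im, Complex.one_re, Complex.one_im, Complex.mul_re,
      Complex.mul_im, Complex.ofReal_re, Complex.ofReal_im, Complex.exp_ofReal_mul_I_re,
      Complex.exp_ofReal_mul_I_im]
    ring
  refine abs_le_of_sq_le_sq' ?_ (norm_nonneg _) |>.2
  rw [sq_abs, hsq]
  -- the difference of the two squares is `(r - cos θ)²`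
  nlinarith [sin_sq_add_cos_sq θ, sq_nonneg (r - cos θ)]

theorem half_le_abs_sin_of_le_abs_le_pi_sub {x θ : ℝ} (hx : 0 ≤ x) (h1 : x ≤ |θ|)
    (h2 : |θ| ≤ π - x) : x / 2 ≤ |sin θ| := by
  have jordan : ∀ y, x ≤ y → y ≤ π / 2 → x / 2 ≤ sin y := fun y hxy hy ↦ by
    have := mul_le_sin (hx.trans hxy) hy
    have : x / 2 ≤ 2 / π * y := by
      rw [div_mul_eq_mul_div, le_div_iff₀ pi_pos]
      nlinarith [pi_le_four]
    linarith
  rw [abs_sin_eq_sin_abs_of_abs_le_pi (by linarith)]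
  rcases le_total |θ| (π / 2) with h | h
  · exact jordan _ h1 h
  · rw [← sin_pi_sub]
    exact jordan _ (by linarith) (by linarith)

theorem norm_sum_smul_pow_ofReal_mul_exp_le {x r θ : ℝ} (hx : 0 < x) (h1 : x ≤ |θ|)
    (h2 : |θ| ≤ π - x) (hr : |r| ≤ 1) {f : ℕ → ℝ} (hf : Monotone f) (hf0 : 0 ≤ f 0) (n : ℕ) :
    ‖∑ k ∈ range (n + 1), f k • ((r : ℂ) * Complex.exp (θ * Complex.I)) ^ k‖ ≤ 8 * f n / x := by
  set z : ℂ := r * Complex.exp (θ * Complex.I)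
  have hz : ‖z‖ ≤ 1 := by
    rwa [norm_mul, Complex.norm_exp_ofReal_mul_I, mul_one, Complex.norm_real, norm_eq_abs]
  have hδ : x / 2 ≤ ‖1 - z‖ :=
    (half_le_abs_sin_of_le_abs_le_pi_sub hx.le h1 h2).trans
      (abs_sin_le_norm_one_sub_ofReal_mul_exp r θ)
  have hz1 : z ≠ 1 := by
    rintro h
    rw [h, sub_self, norm_zero] at hδ
    linarith
  have hfn : 0 ≤ f n := hf0.trans (hf n.zero_le)
  calc _ ≤ 4 * f n / ‖1 - z‖ := norm_sum_smul_pow_le_of_monotone hz hz1 hf hf0 n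
    _ ≤ 4 * f n / (x / 2) := by gcongr
    _ = 8 * f n / x := by field_simp; ring

theorem smul_pow_ofReal_mul_exp (a r θ : ℝ) (k : ℕ) :
    a • ((r : ℂ) * Complex.exp (θ * Complex.I)) ^ k
      = ((r ^ k * a : ℝ) : ℂ) * Complex.exp ((k * θ : ℝ) * Complex.I) := by
  rw [mul_pow, ← Complex.exp_nat_mul, Complex.real_smul]
  push_cast
  ring_nf

theorem trig_sum_bound_general (n : ℕ) (hn : 1 ≤ n) (r : ℝ) (hr : r ∈ Set.Icc (0:ℝ) 1)
    (θ : ℝ) (h1 : ((n : ℝ) ^ ((-1:ℝ)/2)) ≤ |θ|) (h2 : |θ| ≤ Real.pi - (n : ℝ) ^ ((-1:ℝ)/2))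
    (ℓ : ℕ) :
    |∑ k ∈ Finset.range (n + 1), r ^ k * (k : ℝ) ^ ℓ * Real.cos (k * θ)|
        ≤ 8 * (n : ℝ) ^ ((1:ℝ)/2 + ℓ) ∧
    |∑ k ∈ Finset.range (n + 1), r ^ k * (k : ℝ) ^ ℓ * Real.sin (k * θ)|
        ≤ 8 * (n : ℝ) ^ ((1:ℝ)/2 + ℓ) := by
  have hn0 : (0 : ℝ) < n := by exact_mod_cast hn
  have hmono : Monotone fun k : ℕ ↦ (k : ℝ) ^ ℓ := fun i j hij ↦ by dsimp only; gcongr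
  have hS := norm_sum_smul_pow_ofReal_mul_exp_le (rpow_pos_of_pos hn0 _) h1 h2
    (abs_le.2 ⟨by linarith [hr.1], hr.2⟩) hmono (by positivity) n
  have hexp : 8 * (n : ℝ) ^ ℓ / (n : ℝ) ^ ((-1:ℝ)/2) = 8 * (n : ℝ) ^ ((1:ℝ)/2 + ℓ) := by
    rw [← rpow_natCast, mul_div_assoc, ← rpow_sub hn0]
    ring_nf
  rw [hexp] at hS
  set S : ℂ := ∑ k ∈ range (n + 1), ((k : ℝ) ^ ℓ) • ((r : ℂ) * Complex.exp (θ * Complex.I)) ^ k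
  have hre : S.re = ∑ k ∈ range (n + 1), r ^ k * (k : ℝ) ^ ℓ * cos (k * θ) := by
    simp only [S, Complex.re_sum, smul_pow_ofReal_mul_exp, Complex.re_ofReal_mul,
      Complex.exp_ofReal_mul_I_re]
  have him : S.im = ∑ k ∈ range (n + 1), r ^ k * (k : ℝ) ^ ℓ * sin (k * θ) := by
    simp only [S, Complex.im_sum, smul_pow_ofReal_mul_exp, Complex.im_ofReal_mul,
      Complex.exp_ofReal_mul_I_im]
  rw [← hre, ← him]
  exact ⟨(Complex.abs_re_le_norm S).trans hS, (Complex.abs_im_le_norm S).trans hS⟩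

/-- For `r ∈ [0,1]`, `n^{-1/2} ≤ |θ| ≤ π - n^{-1/2}` and `ℓ ∈ {0,1,2}`,
`|∑_{k=0}^n r^k k^ℓ cos(kθ)| ≤ 8 n^{1/2+ℓ}` and likewise for `sin`. -/
theorem trig_sum_bound (n : ℕ) (hn : 1 ≤ n) (r : ℝ) (hr : r ∈ Set.Icc (0:ℝ) 1)
    (θ : ℝ) (h1 : ((n : ℝ) ^ ((-1:ℝ)/2)) ≤ |θ|) (h2 : |θ| ≤ Real.pi - (n : ℝ) ^ ((-1:ℝ)/2))
    (ℓ : ℕ) (hℓ : ℓ ∈ ({0, 1, 2} : Set ℕ)) :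
    |∑ k ∈ Finset.range (n + 1), r ^ k * (k : ℝ) ^ ℓ * Real.cos (k * θ)|
        ≤ 8 * (n : ℝ) ^ ((1:ℝ)/2 + ℓ) ∧
    |∑ k ∈ Finset.range (n + 1), r ^ k * (k : ℝ) ^ ℓ * Real.sin (k * θ)|
        ≤ 8 * (n : ℝ) ^ ((1:ℝ)/2 + ℓ) :=
  trig_sum_bound_general n hn r hr θ h1 h2 ℓ
end
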